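/- arXiv:1611.09351 — 6 statements merged into one kernel-verified Lean document; each statement's English description precedes it below -/
import Mathlib

section
/- Let P be a probability measure on a measurable space Ω and let E, H be measurable events with P(E ∩ H) > 0 and P(Eᶜ ∩ H) > 0. For any real number l, the single-likelihood Adams conditioning Q_l of P at (l, E, H) satisfies Q_l(H) = P(H) and Q_l(Hᶜ) = P(Hᶜ); that is, Adams conditioning on the likelihood of E given H leaves the prior probability of H unchanged. -/
open MeasureTheory Set

variable {Ω : Type*} [MeasurableSpace Ω]

/-- Real-valued probability of an event. -/
noncomputable def pr (P : MeasureTheory.Measure Ω) : Set Ω → ℝ := fun A => (P A).toReal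

/-- Conditional probability `Q⁰(A|B) = Q(A ∩ B)/Q(B)` of a set function (with `x/0 = 0`). -/
noncomputable def cond0 (Q : Set Ω → ℝ) (A B : Set Ω) : ℝ := Q (A ∩ B) / Q B

/-- Single-likelihood Adams conditioning of the set function `Q` at `(l, E, H)`. -/
noncomputable def slac (Q : Set Ω → ℝ) (l : ℝ) (E H : Set Ω) : Set Ω → ℝ :=
  fun x => Q (H ∩ E ∩ x) * (l / cond0 Q E H)
    + Q (H ∩ Eᶜ ∩ x) * ((1 - l) / cond0 Q Eᶜ H)
    + Q (Hᶜ ∩ x)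

/-- Double-likelihood Adams conditioning of the set function `Q` at `(l, l', E, H)`. -/
noncomputable def dlac (Q : Set Ω → ℝ) (l l' : ℝ) (E H : Set Ω) : Set Ω → ℝ :=
  fun x => Q (H ∩ E ∩ x) * (l / cond0 Q E H)
    + Q (H ∩ Eᶜ ∩ x) * ((1 - l) / cond0 Q Eᶜ H)
    + Q (Hᶜ ∩ E ∩ x) * (l' / cond0 Q E Hᶜ)
    + Q (Hᶜ ∩ Eᶜ ∩ x) * ((1 - l') / cond0 Q Eᶜ Hᶜ)

/-
Q_l rescales the part of P inside H ∩ E by l / P⁰(E|H) and the part inside H ∩ Eᶜ by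
(1 − l) / P⁰(Eᶜ|H), and leaves Hᶜ alone. Evaluated at H, the two rescaled pieces become l·P(H)
and (1 − l)·P(H), which add up to P(H); evaluated at Hᶜ, both pieces are empty.
-/

theorem pr_empty (P : Measure Ω) : pr P ∅ = 0 := by
  simp [pr]

-- When `Q B = 0` both sides are `0`, by `x / 0 = 0`.
theorem mul_div_cond0 {α : Type*} {Q : Set α → ℝ} {A B : Set α}
    (hAB : Q (A ∩ B) ≠ 0) (c : ℝ) :
    Q (A ∩ B) * (c / cond0 Q A B) = c * Q B := by
  rw [cond0, div_div_eq_mul_div, mul_div_cancel₀ _ hAB]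

theorem slac_self {α : Type*} {Q : Set α → ℝ} (hQ : Q ∅ = 0) {E H : Set α} (hEH : Q (E ∩ H) ≠ 0)
    (hEcH : Q (Eᶜ ∩ H) ≠ 0) (l : ℝ) : slac Q l E H H = Q H := by
  have inter_self_right (A : Set α) : H ∩ A ∩ H = A ∩ H := by
    rw [inter_right_comm, inter_self, inter_comm]
  rw [slac, inter_self_right, inter_self_right, compl_inter_self, hQ,
    mul_div_cond0 hEH, mul_div_cond0 hEcH]
  ring

theorem slac_compl {α : Type*} {Q : Set α → ℝ} (hQ : Q ∅ = 0) (E H : Set α) (l : ℝ) :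
    slac Q l E H Hᶜ = Q Hᶜ := by
  have inter_compl_right (A : Set α) : H ∩ A ∩ Hᶜ = ∅ := by
    rw [inter_right_comm, inter_compl_self, empty_inter]
  rw [slac, inter_compl_right, inter_compl_right, inter_self, hQ]
  ring

theorem stmt_0_general (P : MeasureTheory.Measure Ω)
    (E H : Set Ω)
    (hEH : 0 < pr P (E ∩ H)) (hEcH : 0 < pr P (Eᶜ ∩ H)) (l : ℝ) :
    slac (pr P) l E H H = pr P H ∧ slac (pr P) l E H Hᶜ = pr P Hᶜ :=
  ⟨slac_self (pr_empty P) hEH.ne' hEcH.ne' l, slac_compl (pr_empty P) E H l⟩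

theorem stmt_0 (P : MeasureTheory.Measure Ω) [IsProbabilityMeasure P]
    (E H : Set Ω) (hE : MeasurableSet E) (hH : MeasurableSet H)
    (hEH : 0 < pr P (E ∩ H)) (hEcH : 0 < pr P (Eᶜ ∩ H)) (l : ℝ) :
    slac (pr P) l E H H = pr P H ∧ slac (pr P) l E H Hᶜ = pr P Hᶜ :=
  stmt_0_general P E H hEH hEcH l
end

section
/- Let P be a probability measure on a measurable space Ω and let E, H be measurable events with P(E ∩ H) > 0, P(Eᶜ ∩ H) > 0, P(E ∩ Hᶜ) > 0 and P(Eᶜ ∩ Hᶜ) > 0. Let l, l′ be real numbers, let Q_l be the single-likelihood Adams conditioning of P at (l, E, H), and let R be the single-likelihood Adams conditioning of the set function Q_l at (l′, E, Hᶜ). Then R⁰(E|Hᶜ) = l′. -/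
open MeasureTheory Set

variable {Ω : Type*} [MeasurableSpace Ω]

/-! Adams conditioning at `(l, E, H)` leaves every event inside `Hᶜ` untouched, so the second
conditioning acts on `P` itself over `Hᶜ`; and conditioning any set function at `(l', E, Hᶜ)`
makes `l'` the conditional probability of `E` given `Hᶜ`, as soon as `E ∩ Hᶜ`, `Eᶜ ∩ Hᶜ` and
`Hᶜ` carry nonzero mass. -/

section AdamsConditioning

variable {α : Type*} (Q : Set α → ℝ) (l : ℝ) (E H : Set α)

theorem slac_apply_of_subset_compl (hQ : Q ∅ = 0) {x : Set α} (hx : x ⊆ Hᶜ) :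
    slac Q l E H x = Q x := by
  have hE : H ∩ E ∩ x = ∅ := eq_empty_of_subset_empty fun _ ⟨⟨hH, _⟩, hx'⟩ => hx hx' hH
  have hEc : H ∩ Eᶜ ∩ x = ∅ := eq_empty_of_subset_empty fun _ ⟨⟨hH, _⟩, hx'⟩ => hx hx' hH
  simp only [slac, hE, hEc, hQ, inter_eq_right.mpr hx, zero_mul, zero_add]

theorem slac_apply_inter (hQ : Q ∅ = 0) (hE : Q (E ∩ H) ≠ 0) :
    slac Q l E H (E ∩ H) = l * Q H := by
  have hE' : H ∩ E ∩ (E ∩ H) = E ∩ H := by grind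
  have hEc : H ∩ Eᶜ ∩ (E ∩ H) = ∅ := by grind
  have hHc : Hᶜ ∩ (E ∩ H) = ∅ := by grind
  simp only [slac, cond0, hE', hEc, hHc, hQ, zero_mul, add_zero]
  field_simp

theorem slac_apply_self (hQ : Q ∅ = 0) (hE : Q (E ∩ H) ≠ 0) (hEc : Q (Eᶜ ∩ H) ≠ 0) :
    slac Q l E H H = Q H := by
  have hE' : H ∩ E ∩ H = E ∩ H := by grind
  have hEc' : H ∩ Eᶜ ∩ H = Eᶜ ∩ H := by grind
  simp only [slac, cond0, hE', hEc', compl_inter_self, hQ]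
  field_simp
  ring

theorem cond0_slac (hQ : Q ∅ = 0) (hE : Q (E ∩ H) ≠ 0) (hEc : Q (Eᶜ ∩ H) ≠ 0) (hH : Q H ≠ 0) :
    cond0 (slac Q l E H) E H = l := by
  rw [cond0, slac_apply_inter Q l E H hQ hE, slac_apply_self Q l E H hQ hE hEc,
    mul_div_cancel_right₀ l hH]

end AdamsConditioning

theorem stmt_5_general (P : MeasureTheory.Measure Ω) [IsProbabilityMeasure P]
    (E H : Set Ω)
    (hEHc : 0 < pr P (E ∩ Hᶜ)) (hEcHc : 0 < pr P (Eᶜ ∩ Hᶜ)) (l l' : ℝ) :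
    cond0 (slac (slac (pr P) l E H) l' E Hᶜ) E Hᶜ = l' := by
  have hP : pr P ∅ = 0 := by simp [pr]
  have hQ : ∀ x ⊆ Hᶜ, slac (pr P) l E H x = pr P x := fun x hx =>
    slac_apply_of_subset_compl (pr P) l E H hP hx
  have hHc : 0 < pr P Hᶜ := hEHc.trans_le (measureReal_mono inter_subset_right)
  apply cond0_slac
  · rw [hQ ∅ (empty_subset _), hP]
  · rw [hQ _ inter_subset_right]; exact hEHc.ne'
  · rw [hQ _ inter_subset_right]; exact hEcHc.ne'
  · rw [hQ _ subset_rfl]; exact hHc.ne'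

theorem stmt_5 (P : MeasureTheory.Measure Ω) [IsProbabilityMeasure P]
    (E H : Set Ω) (hE : MeasurableSet E) (hH : MeasurableSet H)
    (hEH : 0 < pr P (E ∩ H)) (hEcH : 0 < pr P (Eᶜ ∩ H))
    (hEHc : 0 < pr P (E ∩ Hᶜ)) (hEcHc : 0 < pr P (Eᶜ ∩ Hᶜ)) (l l' : ℝ) :
    cond0 (slac (slac (pr P) l E H) l' E Hᶜ) E Hᶜ = l' :=
  stmt_5_general P E H hEHc hEcHc l l'
end

section
/- Let P be a probability measure on a measurable space Ω and let E, H be measurable events with P(E ∩ H) > 0, P(Eᶜ ∩ H) > 0, P(E ∩ Hᶜ) > 0 and P(Eᶜ ∩ Hᶜ) > 0. Let l, l′ be real numbers, let Q_l be the single-likelihood Adams conditioning of P at (l, E, H), and let R be the single-likelihood Adams conditioning of the set function Q_l at (l′, E, Hᶜ). Then for every measurable set x, R(x) = P(Hᶜ ∩ E ∩ x)·(l′ / P⁰(E|Hᶜ)) + P(Hᶜ ∩ Eᶜ ∩ x)·((1 − l′) / P⁰(Eᶜ|Hᶜ)) + P(H ∩ E ∩ x)·(l / P⁰(E|H)) +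 P(H ∩ Eᶜ ∩ x)·((1 − l) / P⁰(Eᶜ|H)); that is, the composition of the two single-likelihood Adams conditioning steps equals double-likelihood Adams conditioning of P at (l, l′, E, H). -/
/-! Conditioning on `(l, E, H)` does not change the set function on subsets of `Hᶜ`, so the
second step conditions on `Hᶜ` with the original conditional probabilities, and it leaves the
already reweighted part inside `H` untouched. -/

open MeasureTheory Set

variable {Ω : Type*} [MeasurableSpace Ω]

section
variable {α : Type*} {Q : Set α → ℝ} (hQ : Q ∅ = 0) (l l' : ℝ) (E H : Set α)
include hQ

theorem slac_compl_inter (y : Set α) : slac Q l E H (Hᶜ ∩ y) = Q (Hᶜ ∩ y) := by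
  have hE : H ∩ E ∩ (Hᶜ ∩ y) = ∅ := by grind
  have hEc : H ∩ Eᶜ ∩ (Hᶜ ∩ y) = ∅ := by grind
  simp only [slac, hE, hEc, hQ, ← inter_assoc, inter_self, zero_mul, zero_add]

theorem slac_inter (y : Set α) :
    slac Q l E H (H ∩ y) =
      Q (H ∩ E ∩ y) * (l / cond0 Q E H) + Q (H ∩ Eᶜ ∩ y) * ((1 - l) / cond0 Q Eᶜ H) := by
  have hE : H ∩ E ∩ (H ∩ y) = H ∩ E ∩ y := by grind
  have hEc : H ∩ Eᶜ ∩ (H ∩ y) = H ∩ Eᶜ ∩ y := by grind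
  simp only [slac, hE, hEc, ← inter_assoc, compl_inter_self, empty_inter, hQ, add_zero]

theorem cond0_slac_compl (A : Set α) : cond0 (slac Q l E H) A Hᶜ = cond0 Q A Hᶜ := by
  have hHc : slac Q l E H Hᶜ = Q Hᶜ := by simpa using slac_compl_inter hQ l E H univ
  rw [cond0, cond0, inter_comm, slac_compl_inter hQ, hHc]

theorem slac_slac_compl : slac (slac Q l E H) l' E Hᶜ = dlac Q l l' E H := by
  ext x
  rw [slac, cond0_slac_compl hQ, cond0_slac_compl hQ, compl_compl, inter_assoc, inter_assoc,
    slac_compl_inter hQ, slac_compl_inter hQ, slac_inter hQ, dlac, ← inter_assoc, ← inter_assoc]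
  ring
end

theorem stmt_6_general (P : MeasureTheory.Measure Ω)
    (E H : Set Ω) (l l' : ℝ) :
    ∀ x : Set Ω, MeasurableSet x →
      slac (slac (pr P) l E H) l' E Hᶜ x =
        pr P (Hᶜ ∩ E ∩ x) * (l' / cond0 (pr P) E Hᶜ)
        + pr P (Hᶜ ∩ Eᶜ ∩ x) * ((1 - l') / cond0 (pr P) Eᶜ Hᶜ)
        + pr P (H ∩ E ∩ x) * (l / cond0 (pr P) E H)
        + pr P (H ∩ Eᶜ ∩ x) * ((1 - l) / cond0 (pr P) Eᶜ H) := by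
  intro x _
  rw [slac_slac_compl (by simp [pr]), dlac]
  ring

theorem stmt_6 (P : MeasureTheory.Measure Ω) [IsProbabilityMeasure P]
    (E H : Set Ω) (hE : MeasurableSet E) (hH : MeasurableSet H)
    (hEH : 0 < pr P (E ∩ H)) (hEcH : 0 < pr P (Eᶜ ∩ H))
    (hEHc : 0 < pr P (E ∩ Hᶜ)) (hEcHc : 0 < pr P (Eᶜ ∩ Hᶜ)) (l l' : ℝ) :
    ∀ x : Set Ω, MeasurableSet x →
      slac (slac (pr P) l E H) l' E Hᶜ x =
        pr P (Hᶜ ∩ E ∩ x) * (l' / cond0 (pr P) E Hᶜ)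
        + pr P (Hᶜ ∩ Eᶜ ∩ x) * ((1 - l') / cond0 (pr P) Eᶜ Hᶜ)
        + pr P (H ∩ E ∩ x) * (l / cond0 (pr P) E H)
        + pr P (H ∩ Eᶜ ∩ x) * ((1 - l) / cond0 (pr P) Eᶜ H) :=
  stmt_6_general P E H l l'
end

section
/- Let P be a probability measure on a measurable space Ω and let E, H be measurable events with P(E ∩ H) > 0, P(Eᶜ ∩ H) > 0, P(E ∩ Hᶜ) > 0 and P(Eᶜ ∩ Hᶜ) > 0. For any real numbers l, l′, the double-likelihood Adams conditioning Q_{l,l′} of P at (l, l′, E, H) satisfies Q_{l,l′}⁰(E|H) = l. -/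
open MeasureTheory Set

variable {Ω : Type*} [MeasurableSpace Ω]

/-! On subsets of `H` only the two `H`-terms of `dlac` contribute, and the weights
`l / Q⁰(E|H)` and `(1 - l) / Q⁰(Eᶜ|H)` rescale `Q(E ∩ H)` to `l · Q(H)` and `Q(Eᶜ ∩ H)` to
`(1 - l) · Q(H)`. Hence `Q_{l,l'}(H) = Q(H)` and `Q_{l,l'}(E ∩ H) = l · Q(H)`; this uses only
`Q(∅) = 0`, not additivity. -/

section AdamsConditioning

variable {α : Type*} {Q : Set α → ℝ} {E H : Set α} (l l' : ℝ)

theorem dlac_inter (h0 : Q ∅ = 0) (hEH : Q (E ∩ H) ≠ 0) :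
    dlac Q l l' E H (E ∩ H) = l * Q H := by
  have h₁ : H ∩ E ∩ (E ∩ H) = E ∩ H := by ext; simp; tauto
  have h₂ : H ∩ Eᶜ ∩ (E ∩ H) = ∅ := by ext; simp; tauto
  have h₃ : Hᶜ ∩ E ∩ (E ∩ H) = ∅ := by ext; simp; tauto
  have h₄ : Hᶜ ∩ Eᶜ ∩ (E ∩ H) = ∅ := by ext; simp; tauto
  simp only [dlac, cond0, h₁, h₂, h₃, h₄, h0]
  field_simp
  ring

theorem dlac_self (h0 : Q ∅ = 0) (hEH : Q (E ∩ H) ≠ 0) (hEcH : Q (Eᶜ ∩ H) ≠ 0) :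
    dlac Q l l' E H H = Q H := by
  have h₁ : H ∩ E ∩ H = E ∩ H := by ext; simp; tauto
  have h₂ : H ∩ Eᶜ ∩ H = Eᶜ ∩ H := by ext; simp; tauto
  have h₃ : Hᶜ ∩ E ∩ H = ∅ := by ext; simp; tauto
  have h₄ : Hᶜ ∩ Eᶜ ∩ H = ∅ := by ext; simp; tauto
  simp only [dlac, cond0, h₁, h₂, h₃, h₄, h0]
  field_simp
  ring

theorem cond0_dlac (h0 : Q ∅ = 0) (hEH : Q (E ∩ H) ≠ 0) (hEcH : Q (Eᶜ ∩ H) ≠ 0)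
    (hH : Q H ≠ 0) : cond0 (dlac Q l l' E H) E H = l := by
  rw [cond0, dlac_inter l l' h0 hEH, dlac_self l l' h0 hEH hEcH, mul_div_cancel_right₀ l hH]

end AdamsConditioning

theorem stmt_9_general (P : MeasureTheory.Measure Ω) [IsProbabilityMeasure P]
    (E H : Set Ω)
    (hEH : 0 < pr P (E ∩ H)) (hEcH : 0 < pr P (Eᶜ ∩ H))
    (l l' : ℝ) :
    cond0 (dlac (pr P) l l' E H) E H = l :=
  cond0_dlac l l' measureReal_empty hEH.ne' hEcH.ne'
    (hEH.trans_le (measureReal_mono inter_subset_right)).ne'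

theorem stmt_9 (P : MeasureTheory.Measure Ω) [IsProbabilityMeasure P]
    (E H : Set Ω) (hE : MeasurableSet E) (hH : MeasurableSet H)
    (hEH : 0 < pr P (E ∩ H)) (hEcH : 0 < pr P (Eᶜ ∩ H))
    (hEHc : 0 < pr P (E ∩ Hᶜ)) (hEcHc : 0 < pr P (Eᶜ ∩ Hᶜ)) (l l' : ℝ) :
    cond0 (dlac (pr P) l l' E H) E H = l :=
  stmt_9_general P E H hEH hEcH l l'
end

section
/- Let P be a probability measure on a measurable space Ω and let E, H be measurable events with P(E ∩ H) > 0, P(Eᶜ ∩ H) > 0, P(E ∩ Hᶜ) > 0 and P(Eᶜ ∩ Hᶜ) > 0. Let l, l′ be real numbers with 0 < l ≤ 1 and 0 < l′ ≤ 1 and set r = l / l′. Then Bayesian conditioning on E of the double-likelihood Adams conditioning Q_{l,l′} of P at (l, l′, E, H) satisfies, for every measurable set x, Q_{l,l′}⁰(x|E) = (r·P⁰(x|H ∩ E)·P(H) + P⁰(x|Hᶜ ∩ E)·P(Hᶜ)) / (r·P(H) + P(Hᶜ)). -/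
open MeasureTheory Set

variable {Ω : Type*} [MeasurableSpace Ω]

/-!
On `E`, the double-likelihood Adams update rescales `P` on `H ∩ E` by `l · P(H) / P(E ∩ H)` and
on `Hᶜ ∩ E` by `l' · P(Hᶜ) / P(E ∩ Hᶜ)`, and vanishes on `Eᶜ`. Conditioning on `E` therefore
gives the mixture of `P⁰(·|H ∩ E)` and `P⁰(·|Hᶜ ∩ E)` with weights proportional to `l · P(H)` and
`l' · P(Hᶜ)`; dividing both weights by `l'` turns them into `r · P(H)` and `P(Hᶜ)`.
-/

section SetFunction

variable {α : Type*} (Q : Set α → ℝ) (l l' : ℝ) (E H : Set α)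

theorem dlac_inter_right (hQ : Q ∅ = 0) (x : Set α) :
    dlac Q l l' E H (x ∩ E) =
      Q (x ∩ (H ∩ E)) * (l / cond0 Q E H) + Q (x ∩ (Hᶜ ∩ E)) * (l' / cond0 Q E Hᶜ) := by
  have compl_part (K : Set α) : K ∩ Eᶜ ∩ (x ∩ E) = ∅ := by
    ext; simp only [mem_inter_iff, mem_compl_iff, mem_empty_iff_false]; tauto
  have E_part (K : Set α) : K ∩ E ∩ (x ∩ E) = x ∩ (K ∩ E) := by
    ext; simp only [mem_inter_iff]; tauto
  simp only [dlac, compl_part, E_part, hQ, zero_mul, add_zero]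

theorem cond0_dlac_s12 (hQ : Q ∅ = 0) (hEH : Q (E ∩ H) ≠ 0) (hEHc : Q (E ∩ Hᶜ) ≠ 0) (x : Set α) :
    cond0 (dlac Q l l' E H) x E =
      (l * cond0 Q x (H ∩ E) * Q H + l' * cond0 Q x (Hᶜ ∩ E) * Q Hᶜ) /
        (l * Q H + l' * Q Hᶜ) := by
  have total := dlac_inter_right Q l l' E H hQ univ
  rw [univ_inter] at total
  simp only [cond0, dlac_inter_right Q l l' E H hQ, total, univ_inter, inter_comm H, inter_comm Hᶜ]
  field_simp

end SetFunction

theorem stmt_12_general (P : MeasureTheory.Measure Ω) (E H : Set Ω)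
    (hEH : 0 < pr P (E ∩ H)) (hEHc : 0 < pr P (E ∩ Hᶜ))
    (l l' : ℝ) (hl'0 : 0 < l') (r : ℝ) (hr : r = l / l') :
    ∀ x : Set Ω, MeasurableSet x →
      cond0 (dlac (pr P) l l' E H) x E =
        (r * cond0 (pr P) x (H ∩ E) * pr P H + cond0 (pr P) x (Hᶜ ∩ E) * pr P Hᶜ) /
          (r * pr P H + pr P Hᶜ) := by
  intro x _
  have pr_empty : pr P ∅ = 0 := by simp [pr]
  rw [cond0_dlac_s12 (pr P) l l' E H pr_empty hEH.ne' hEHc.ne', hr,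
    ← mul_div_mul_left (l / l' * _ * _ + _) _ hl'0.ne']
  congr 1 <;> field_simp

theorem stmt_12 (P : MeasureTheory.Measure Ω) [IsProbabilityMeasure P]
    (E H : Set Ω) (hE : MeasurableSet E) (hH : MeasurableSet H)
    (hEH : 0 < pr P (E ∩ H)) (hEcH : 0 < pr P (Eᶜ ∩ H))
    (hEHc : 0 < pr P (E ∩ Hᶜ)) (hEcHc : 0 < pr P (Eᶜ ∩ Hᶜ))
    (l l' : ℝ) (hl0 : 0 < l) (hl1 : l ≤ 1) (hl'0 : 0 < l') (hl'1 : l' ≤ 1)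
    (r : ℝ) (hr : r = l / l') :
    ∀ x : Set Ω, MeasurableSet x →
      cond0 (dlac (pr P) l l' E H) x E =
        (r * cond0 (pr P) x (H ∩ E) * pr P H + cond0 (pr P) x (Hᶜ ∩ E) * pr P Hᶜ) /
          (r * pr P H + pr P Hᶜ) :=
  stmt_12_general P E H hEH hEHc l l' hl'0 r hr
end

section
/- Prosecutor's conditioning: let P be a probability measure on a measurable space Ω and let E, H, D be measurable events with P(E ∩ H) > 0 and D ⊆ E. Then the single-likelihood Adams conditioning Q₁ of P at (1, E, H) — the posterior belief after learning that the likelihood of E given H equals 1 — satisfies Q₁(H ∩ D) = P(H ∩ D) · P(H) / P(E ∩ H); in particular the posterior probability of H ∩ D is the prior probability multiplied by the factor 1 / P⁰(E|H). -/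
open MeasureTheory Set

variable {Ω : Type*} [MeasurableSpace Ω]

theorem slac_of_subset_inter {α : Type*} {Q : Set α → ℝ} (hQ : Q ∅ = 0) (l : ℝ) {E H x : Set α}
    (hx : x ⊆ H ∩ E) : slac Q l E H x = Q x * (l / cond0 Q E H) := by
  have hE : H ∩ E ∩ x = x := inter_eq_right.mpr hx
  have hEc : H ∩ Eᶜ ∩ x = ∅ :=
    eq_empty_of_forall_notMem fun _ ⟨⟨_, hyE⟩, hy⟩ => hyE (hx hy).2
  have hHc : Hᶜ ∩ x = ∅ :=
    eq_empty_of_forall_notMem fun _ ⟨hyH, hy⟩ => hyH (hx hy).1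
  simp only [slac, hE, hEc, hHc, hQ, zero_mul, add_zero]

theorem stmt_19_general (P : MeasureTheory.Measure Ω)
    (E H D : Set Ω) (hDE : D ⊆ E) :
    slac (pr P) 1 E H (H ∩ D) = pr P (H ∩ D) * pr P H / pr P (E ∩ H) := by
  rw [slac_of_subset_inter (pr_empty P) 1 (inter_subset_inter_right H hDE), cond0, one_div_div,
    mul_div_assoc]

theorem stmt_19 (P : MeasureTheory.Measure Ω) [IsProbabilityMeasure P]
    (E H D : Set Ω) (hE : MeasurableSet E) (hH : MeasurableSet H) (hD : MeasurableSet D)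
    (hEH : 0 < pr P (E ∩ H)) (hDE : D ⊆ E) :
    slac (pr P) 1 E H (H ∩ D) = pr P (H ∩ D) * pr P H / pr P (E ∩ H) :=
  stmt_19_general P E H D hDE
end
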